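/- Let (n_k)_{k≥0} be a strictly increasing sequence of positive integers such that n_k divides n_{k+1} for every k ≥ 0, and let (a_k)_{k≥0} be a sequence of positive real numbers decreasing to zero such that the series Σ_{k≥0} a_k diverges. Then there exists a continuous (atomless) Borel probability measure σ on 𝕋 such that |∫_𝕋 z^{n_k} dσ(z) − 1| ≤ a_k for every k ≥ 0. -/

import Mathlib

open MeasureTheory Filter Topology

/-!
Let `X = ∑ₘ εₘ / n_{2m}` with independent digits `εₘ ∈ {0, 1}`, `P(εₘ = 1) = a_{2m} / C` for a
constant `C ≥ 2π` with `a_0 / C ≤ 1/2`, and let `σ` be the law of `exp (2πiX)`. Since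
`n_{2m+2} ≥ 4 n_{2m}`, every weight exceeds the sum of all later ones, so `X` determines its
digits; since `∑ a_{2m} = ∞`, each digit sequence has probability zero. Hence `exp (2πiX)` takes
each value with probability zero. For `2m ≤ k` the number `n_k / n_{2m}` is an integer, so
`σ̂(n_k) = E exp (2πi n_k T)` with `T` the tail of `X` from `m = k/2 + 1` on, and
`|σ̂(n_k) - 1| ≤ 2π n_k E T ≤ 2π n_k (a_k / C) (4/3) / (2 n_k) ≤ a_k`.
-/

open Finset Complex ProbabilityTheory
open scoped Real

section DvdChain

variable {n : ℕ → ℕ}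

lemma two_mul_le_of_dvd_of_lt {a b : ℕ} (hdvd : a ∣ b) (hlt : a < b) : 2 * a ≤ b := by
  obtain ⟨t, rfl⟩ := hdvd
  rcases t with _ | _ | t
  · simp at hlt
  · simp at hlt
  · nlinarith

lemma StrictMono.mul_two_pow_le (hmono : StrictMono n) (hdvd : ∀ k, n k ∣ n (k + 1))
    (j i : ℕ) : n j * 2 ^ i ≤ n (j + i) := by
  induction i with
  | zero => simp
  | succ i ih =>
    calc n j * 2 ^ (i + 1) = 2 * (n j * 2 ^ i) := by ring
      _ ≤ 2 * n (j + i) := by gcongr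
      _ ≤ n (j + i + 1) := two_mul_le_of_dvd_of_lt (hdvd _) (hmono (Nat.lt_succ_self _))

end DvdChain

section Geometric

variable {v : ℕ → ℝ} {r : ℝ}

lemma le_pow_mul_of_le_mul (hr : 0 ≤ r) (hvr : ∀ m, v (m + 1) ≤ r * v m) (m j : ℕ) :
    v (j + m) ≤ r ^ j * v m := by
  simpa only [add_comm j m, add_zero] using
    le_geom (u := fun j => v (m + j)) hr j fun i _ => hvr (m + i)

variable (hv : ∀ m, 0 ≤ v m) (hr0 : 0 ≤ r) (hr1 : r < 1) (hvr : ∀ m, v (m + 1) ≤ r * v m)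
include hv hr0 hr1 hvr

lemma summable_of_le_mul : Summable v :=
  .of_nonneg_of_le hv (fun j => by simpa using le_pow_mul_of_le_mul hr0 hvr 0 j)
    ((summable_geometric_of_lt_one hr0 hr1).mul_right _)

lemma tsum_nat_add_le_of_le_mul (m : ℕ) : ∑' j, v (j + m) ≤ v m / (1 - r) := by
  calc ∑' j, v (j + m) ≤ ∑' j, r ^ j * v m :=
        ((summable_nat_add_iff m).2 (summable_of_le_mul hv hr0 hr1 hvr)).tsum_le_tsum
          (le_pow_mul_of_le_mul hr0 hvr m) ((summable_geometric_of_lt_one hr0 hr1).mul_right _)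
    _ = v m / (1 - r) := by
      rw [tsum_mul_right, tsum_geometric_of_lt_one hr0 hr1, inv_mul_eq_div]

lemma tsum_nat_add_succ_lt_of_le_mul (hr : r < 1 / 2) (hvpos : ∀ m, 0 < v m) (m : ℕ) :
    ∑' j, v (j + m + 1) < v m := by
  have h1r : 0 < 1 - r := by linarith
  calc ∑' j, v (j + m + 1) ≤ v (m + 1) / (1 - r) := tsum_nat_add_le_of_le_mul hv hr0 hr1 hvr (m + 1)
    _ ≤ r * v m / (1 - r) := by gcongr; exact hvr m
    _ < v m := by rw [div_lt_iff₀ h1r]; nlinarith [hvpos m]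

lemma tsum_mul_nat_add_le_of_le_mul {p : ℕ → ℝ} {c : ℝ} (m : ℕ) (hp : ∀ j, 0 ≤ p (j + m))
    (hpc : ∀ j, p (j + m) ≤ c) : ∑' j, p (j + m) * v (j + m) ≤ c * (v m / (1 - r)) := by
  have hvs := (summable_nat_add_iff m).2 (summable_of_le_mul hv hr0 hr1 hvr)
  have hle (j : ℕ) : p (j + m) * v (j + m) ≤ c * v (j + m) := by gcongr; exacts [hv _, hpc j]
  calc ∑' j, p (j + m) * v (j + m) ≤ ∑' j, c * v (j + m) :=
        (hvs.mul_left c).of_nonneg_of_le (fun j => mul_nonneg (hp j) (hv _)) hle |>.tsum_le_tsum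
          hle (hvs.mul_left c)
    _ ≤ c * (v m / (1 - r)) := by
        rw [tsum_mul_left]
        exact mul_le_mul_of_nonneg_left (tsum_nat_add_le_of_le_mul hv hr0 hr1 hvr m)
          ((hp 0).trans (hpc 0))

end Geometric

noncomputable def digitSum (v : ℕ → ℝ) (ε : ℕ → Bool) : ℝ := ∑' m, if ε m then v m else 0

lemma continuous_ite_apply (m : ℕ) (c : ℝ) : Continuous fun ε : ℕ → Bool => if ε m then c else 0 :=
  (continuous_of_discreteTopology (f := fun b : Bool => if b then c else 0)).comp
    (continuous_apply m)

section DigitSum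

variable {v : ℕ → ℝ} (hv : ∀ m, 0 ≤ v m)
include hv

lemma ite_mem_Icc (ε : ℕ → Bool) (m : ℕ) : (if ε m then v m else 0) ∈ Set.Icc 0 (v m) := by
  split_ifs <;> simp [hv m]

lemma digitSum_nonneg (ε : ℕ → Bool) : 0 ≤ digitSum v ε :=
  tsum_nonneg fun m => (ite_mem_Icc hv ε m).1

variable (hvs : Summable v)
include hvs

lemma summable_ite (ε : ℕ → Bool) : Summable fun m => if ε m then v m else 0 :=
  hvs.of_nonneg_of_le (fun m => (ite_mem_Icc hv ε m).1) (fun m => (ite_mem_Icc hv ε m).2)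

lemma digitSum_le_tsum (ε : ℕ → Bool) : digitSum v ε ≤ ∑' m, v m :=
  (summable_ite hv hvs ε).tsum_le_tsum (fun m => (ite_mem_Icc hv ε m).2) hvs

lemma digitSum_eq_ite_add (ε : ℕ → Bool) :
    digitSum v ε = (if ε 0 then v 0 else 0) + digitSum (fun m => v (m + 1)) (fun m => ε (m + 1)) :=
  (summable_ite hv hvs ε).tsum_eq_zero_add

lemma digitSum_eq_sum_add_tsum (ε : ℕ → Bool) (M : ℕ) :
    digitSum v ε = ∑ m ∈ range M, (if ε m then v m else 0) +
      digitSum (fun j => v (j + M)) (fun j => ε (j + M)) :=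
  ((summable_ite hv hvs ε).sum_add_tsum_nat_add M).symm

lemma continuous_digitSum : Continuous (digitSum v) :=
  continuous_tsum (fun m => continuous_ite_apply m (v m)) hvs fun m ε => by
      rw [Real.norm_of_nonneg (ite_mem_Icc hv ε m).1]; exact (ite_mem_Icc hv ε m).2

variable {ε ε' : ℕ → Bool}

lemma digitSum_lt_of_head_false (htail : ∑' j, v (j + 1) < v 0) (hε : ε 0 = false) :
    digitSum v ε < v 0 := by
  rw [digitSum_eq_ite_add hv hvs, hε, if_neg Bool.false_ne_true, zero_add]
  exact (digitSum_le_tsum (fun m => hv _) ((summable_nat_add_iff 1).mpr hvs) _).trans_lt htail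

lemma le_digitSum_of_head_true (hε : ε 0 = true) : v 0 ≤ digitSum v ε := by
  rw [digitSum_eq_ite_add hv hvs, hε, if_pos rfl]
  exact le_add_of_nonneg_right (digitSum_nonneg (fun m => hv _) _)

lemma head_eq_of_digitSum_eq (htail : ∑' j, v (j + 1) < v 0) (h : digitSum v ε = digitSum v ε') :
    ε 0 = ε' 0 := by
  cases hε : ε 0 <;> cases hε' : ε' 0
  · rfl
  · exact absurd h (digitSum_lt_of_head_false hv hvs htail hε |>.trans_le
      (le_digitSum_of_head_true hv hvs hε')).ne
  · exact absurd h.symm (digitSum_lt_of_head_false hv hvs htail hε' |>.trans_le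
      (le_digitSum_of_head_true hv hvs hε)).ne
  · rfl

end DigitSum

lemma digitSum_injective {v : ℕ → ℝ} (hv : ∀ m, 0 ≤ v m) (hvs : Summable v)
    (htail : ∀ m, ∑' j, v (j + m + 1) < v m) : Function.Injective (digitSum v) := by
  intro ε ε' h
  funext m
  induction m generalizing v ε ε' with
  | zero => exact head_eq_of_digitSum_eq hv hvs (htail 0) h
  | succ m ih =>
    have h0 := head_eq_of_digitSum_eq hv hvs (htail 0) h
    rw [digitSum_eq_ite_add hv hvs, digitSum_eq_ite_add hv hvs ε', h0, add_right_inj] at h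
    exact ih (fun m => hv (m + 1)) ((summable_nat_add_iff 1).mpr hvs) (fun m => htail (m + 1)) h

lemma nullSingletonClass_infinitePi {α : Type*} [MeasurableSpace α] [MeasurableSingletonClass α]
    (μ : ℕ → Measure α) [∀ m, IsProbabilityMeasure (μ m)] {p : ℕ → ℝ} (hp0 : ∀ m, 0 ≤ p m)
    (hp : ¬ Summable p) (hμ : ∀ m x, (μ m).real {x} ≤ 1 - p m) :
    NullSingletonClass (Measure.infinitePi μ) := by
  refine ⟨fun ω => le_antisymm ?_ zero_le⟩
  have hlim : Tendsto (fun M => ENNReal.ofReal (Real.exp (-∑ m ∈ range M, p m))) atTop (𝓝 0) := by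
    simpa using ENNReal.tendsto_ofReal (Real.tendsto_exp_atBot.comp
      (tendsto_neg_atTop_atBot.comp ((not_summable_iff_tendsto_nat_atTop_of_nonneg hp0).1 hp)))
  refine ge_of_tendsto' hlim fun M => ?_
  calc Measure.infinitePi μ {ω} ≤ Measure.infinitePi μ (Set.pi (range M) fun m => {ω m}) :=
        measure_mono fun ω' h m _ => h ▸ rfl
    _ = ∏ m ∈ range M, μ m {ω m} := Measure.infinitePi_pi μ fun _ _ => measurableSet_singleton _
    _ = ENNReal.ofReal (∏ m ∈ range M, (μ m).real {ω m}) := by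
        rw [ENNReal.ofReal_prod_of_nonneg fun _ _ => measureReal_nonneg]
        exact prod_congr rfl fun m _ => by rw [ofReal_measureReal]
    _ ≤ ENNReal.ofReal (∏ m ∈ range M, Real.exp (-p m)) :=
        ENNReal.ofReal_le_ofReal <| prod_le_prod (fun _ _ => measureReal_nonneg)
          fun m _ => (hμ m _).trans (Real.one_sub_le_exp_neg _)
    _ = ENNReal.ofReal (Real.exp (-∑ m ∈ range M, p m)) := by
        rw [← Real.exp_sum, sum_neg_distrib]

lemma bernoulliMeasure_real_singleton_le {p : unitInterval} (hp : (p : ℝ) ≤ 1 / 2) (b : Bool) :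
    (bernoulliMeasure true false p).real {b} ≤ 1 - p := by
  cases b
  · simp
  · simp
    linarith

section CoinProduct

variable (μ : ℕ → Measure Bool) [∀ m, IsProbabilityMeasure (μ m)]

lemma integral_ite_apply (m : ℕ) (c : ℝ) :
    ∫ ω, (if ω m then c else 0) ∂Measure.infinitePi μ = (μ m).real {true} * c := by
  have h := integral_map (μ := Measure.infinitePi μ) (measurable_pi_apply m).aemeasurable
    (f := fun b : Bool => if b then c else 0) (by fun_prop)
  rw [Measure.infinitePi_map_eval] at h
  rw [← h, integral_fintype .of_finite]
  simp

lemma integral_digitSum_comp {w : ℕ → ℝ} (hw : ∀ j, 0 ≤ w j) (hws : Summable w) (e : ℕ → ℕ) :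
    ∫ ω, digitSum w (fun j => ω (e j)) ∂Measure.infinitePi μ =
      ∑' j, (μ (e j)).real {true} * w j := by
  have hle (j : ℕ) (ω : ℕ → Bool) : ‖if ω (e j) then w j else 0‖ ≤ w j := by
    split_ifs <;> simp [abs_of_nonneg, hw j]
  have hint (j : ℕ) : Integrable (fun ω : ℕ → Bool => if ω (e j) then w j else 0)
      (Measure.infinitePi μ) :=
    (integrable_const (w j)).mono' (continuous_ite_apply _ _).aestronglyMeasurable
      (ae_of_all _ (hle j))
  unfold digitSum
  rw [← integral_tsum_of_summable_integral_norm hint]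
  · exact tsum_congr fun j => integral_ite_apply μ (e j) (w j)
  · refine hws.of_nonneg_of_le (fun j => integral_nonneg fun _ => norm_nonneg _) fun j => ?_
    simpa using integral_mono (hint j).norm (integrable_const (w j)) (hle j)

end CoinProduct

lemma norm_exp_two_pi_mul_I (x : ℝ) : ‖cexp (2 * π * x * I)‖ = 1 := by
  rw [show 2 * π * (x : ℂ) * I = ((2 * π * x : ℝ) : ℂ) * I by push_cast; ring,
    norm_exp_ofReal_mul_I]

lemma norm_exp_two_pi_mul_I_sub_one_le (x : ℝ) : ‖cexp (2 * π * x * I) - 1‖ ≤ 2 * π * |x| := by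
  have h := Real.norm_exp_I_mul_ofReal_sub_one_le (x := 2 * π * x)
  rwa [show I * ((2 * π * x : ℝ) : ℂ) = 2 * π * x * I by push_cast; ring, Real.norm_eq_abs,
    abs_mul, abs_of_pos Real.two_pi_pos] at h

lemma exp_two_pi_mul_int_add_mul_I (z : ℤ) (x : ℂ) :
    cexp (2 * π * (z + x) * I) = cexp (2 * π * x * I) := by
  rw [show 2 * π * (z + x) * I = z * (2 * π * I) + 2 * π * x * I by ring, exp_add,
    exp_int_mul_two_pi_mul_I, one_mul]

lemma countable_preimage_exp_two_pi_mul_I (z : ℂ) :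
    ((fun x : ℝ => cexp (2 * π * x * I)) ⁻¹' {z}).Countable := by
  rcases Set.eq_empty_or_nonempty ((fun x : ℝ => cexp (2 * π * x * I)) ⁻¹' {z}) with h | ⟨x₀, hx₀⟩
  · simp [h]
  refine (Set.countable_range fun d : ℤ => x₀ + d).mono fun x hx => ?_
  obtain ⟨d, hd⟩ := exp_eq_exp_iff_exists_int.1 (hx.trans hx₀.symm)
  refine ⟨d, ?_⟩
  have h2πI : (2 * π * I : ℂ) ≠ 0 := by simp [Real.pi_ne_zero, I_ne_zero]
  have : (x : ℂ) = x₀ + d := mul_right_cancel₀ h2πI (by linear_combination hd)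
  exact_mod_cast this.symm

lemma norm_integral_exp_sub_one_le {Ω : Type*} [MeasurableSpace Ω] {P : Measure Ω}
    [IsProbabilityMeasure P] {Y : Ω → ℝ} (hY : Integrable Y P) :
    ‖∫ ω, cexp (2 * π * Y ω * I) ∂P - 1‖ ≤ 2 * π * ∫ ω, |Y ω| ∂P := by
  have hint : Integrable (fun ω => cexp (2 * π * Y ω * I)) P := by
    refine (integrable_const (1 : ℝ)).mono'
      ((by fun_prop : Continuous fun x : ℝ => cexp (2 * π * x * I)).comp_aestronglyMeasurable
        hY.aestronglyMeasurable) (ae_of_all _ fun ω => (norm_exp_two_pi_mul_I (Y ω)).le)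
  calc ‖∫ ω, cexp (2 * π * Y ω * I) ∂P - 1‖ = ‖∫ ω, (cexp (2 * π * Y ω * I) - 1) ∂P‖ := by
        rw [integral_sub hint (integrable_const 1)]; simp
    _ ≤ ∫ ω, ‖cexp (2 * π * Y ω * I) - 1‖ ∂P := norm_integral_le_integral_norm _
    _ ≤ ∫ ω, 2 * π * |Y ω| ∂P := integral_mono (hint.sub (integrable_const 1)).norm
        (hY.abs.const_mul _) fun ω => norm_exp_two_pi_mul_I_sub_one_le (Y ω)
    _ = 2 * π * ∫ ω, |Y ω| ∂P := integral_const_mul _ _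

/-- The law of `exp (2πi ∑ₘ εₘ vₘ)` when the digits `εₘ` are independent with laws `μ m`. -/
noncomputable def digitMeasure (μ : ℕ → Measure Bool) (v : ℕ → ℝ) : Measure ℂ :=
  (Measure.infinitePi μ).map fun ω => cexp (2 * π * digitSum v ω * I)

section DigitMeasure

variable (μ : ℕ → Measure Bool) {v : ℕ → ℝ}
  (hv : ∀ m, 0 ≤ v m) (hvs : Summable v)
include hv hvs

lemma measurable_exp_digitSum : Measurable fun ω => cexp (2 * π * digitSum v ω * I) :=
  (by fun_prop : Continuous fun x : ℝ => cexp (2 * π * x * I)).measurable.comp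
    (continuous_digitSum hv hvs).measurable

lemma isProbabilityMeasure_digitMeasure [∀ m, IsProbabilityMeasure (μ m)] :
    IsProbabilityMeasure (digitMeasure μ v) :=
  Measure.isProbabilityMeasure_map (measurable_exp_digitSum hv hvs).aemeasurable

lemma digitMeasure_compl_unitSphere : digitMeasure μ v {z : ℂ | ‖z‖ = 1}ᶜ = 0 := by
  rw [digitMeasure, Measure.map_apply (measurable_exp_digitSum hv hvs)
    (isClosed_eq continuous_norm continuous_const).measurableSet.compl]
  convert measure_empty (μ := Measure.infinitePi μ)
  exact Set.eq_empty_iff_forall_notMem.2 fun ω hω => hω (norm_exp_two_pi_mul_I _)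

lemma digitMeasure_singleton [NullSingletonClass (Measure.infinitePi μ)]
    (hinj : Function.Injective (digitSum v)) (z : ℂ) : digitMeasure μ v {z} = 0 := by
  rw [digitMeasure, Measure.map_apply (measurable_exp_digitSum hv hvs) (measurableSet_singleton z)]
  exact ((countable_preimage_exp_two_pi_mul_I z).preimage hinj).measure_zero _

lemma integral_pow_digitMeasure (N : ℕ) :
    ∫ z, z ^ N ∂digitMeasure μ v =
      ∫ ω, cexp (2 * π * (N * digitSum v ω : ℝ) * I) ∂Measure.infinitePi μ := by
  rw [digitMeasure, integral_map (measurable_exp_digitSum hv hvs).aemeasurable (by fun_prop)]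
  congr 1 with ω
  rw [← exp_nat_mul]
  push_cast
  ring_nf

lemma norm_integral_pow_digitMeasure_sub_one_le [∀ m, IsProbabilityMeasure (μ m)] (N M : ℕ)
    (hN : ∀ m < M, ∃ z : ℤ, (N : ℝ) * v m = z) :
    ‖∫ z, z ^ N ∂digitMeasure μ v - 1‖ ≤ 2 * π * N * ∑' j, (μ (j + M)).real {true} * v (j + M) := by
  set T : (ℕ → Bool) → ℝ := fun ω => digitSum (fun j => v (j + M)) (fun j => ω (j + M))
  have hvMs : Summable fun j => v (j + M) := (summable_nat_add_iff M).2 hvs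
  have hhead (ω : ℕ → Bool) : ∃ z : ℤ, (N : ℝ) * ∑ m ∈ range M, (if ω m then v m else 0) = z := by
    rw [mul_sum]
    refine sum_induction _ (fun x : ℝ => ∃ z : ℤ, x = z) ?_ ⟨0, by simp⟩ fun m hm => ?_
    · rintro _ _ ⟨a, rfl⟩ ⟨b, rfl⟩
      exact ⟨a + b, by push_cast; rfl⟩
    · split_ifs
      · exact hN m (mem_range.1 hm)
      · exact ⟨0, by simp⟩
  have hexp (ω : ℕ → Bool) :
      cexp (2 * π * (N * digitSum v ω : ℝ) * I) = cexp (2 * π * (N * T ω : ℝ) * I) := by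
    obtain ⟨z, hz⟩ := hhead ω
    rw [digitSum_eq_sum_add_tsum hv hvs ω M, mul_add, hz, ofReal_add, ofReal_intCast]
    exact exp_two_pi_mul_int_add_mul_I _ _
  have hT : Integrable (fun ω => (N : ℝ) * T ω) (Measure.infinitePi μ) := by
    refine ((integrable_const (∑' j, v (j + M))).mono' ?_ (ae_of_all _ fun ω => ?_)).const_mul _
    · exact ((continuous_digitSum (fun j => hv _) hvMs).comp
        (continuous_pi fun j => continuous_apply (j + M))).aestronglyMeasurable
    · rw [Real.norm_of_nonneg (digitSum_nonneg (fun j => hv _) fun j => ω (j + M))]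
      exact digitSum_le_tsum (fun j => hv _) hvMs fun j => ω (j + M)
  rw [integral_pow_digitMeasure μ hv hvs, integral_congr_ae (ae_of_all _ hexp)]
  refine (norm_integral_exp_sub_one_le hT).trans_eq ?_
  have hT0 (ω : ℕ → Bool) : 0 ≤ (N : ℝ) * T ω :=
    mul_nonneg N.cast_nonneg (digitSum_nonneg (fun j => hv _) fun j => ω (j + M))
  simp_rw [abs_of_nonneg (hT0 _)]
  rw [integral_const_mul, integral_digitSum_comp μ (fun j => hv _) hvMs (fun j => j + M)]
  ring

end DigitMeasure

section DvdChainWeights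

variable {n : ℕ → ℕ} (hdvd : ∀ k, n k ∣ n (k + 1)) (hpos : ∀ k, 0 < n k)
include hdvd hpos

lemma exists_int_cast_mul_inv_eq {j k : ℕ} (hjk : j ≤ k) :
    ∃ z : ℤ, (n k : ℝ) * (n j : ℝ)⁻¹ = z := by
  obtain ⟨c, hc⟩ := Nat.rel_of_forall_rel_succ_of_le (· ∣ ·) hdvd hjk
  refine ⟨c, ?_⟩
  rw [hc]
  push_cast
  field_simp [(hpos j).ne']

variable (hmono : StrictMono n)
include hmono

lemma inv_cast_two_mul_succ_le (m : ℕ) :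
    (n (2 * (m + 1)) : ℝ)⁻¹ ≤ 4⁻¹ * (n (2 * m) : ℝ)⁻¹ := by
  have h := hmono.mul_two_pow_le hdvd (2 * m) 2
  rw [← mul_inv]
  refine inv_anti₀ (by have := hpos (2 * m); positivity) ?_
  rw [show 2 * (m + 1) = 2 * m + 2 by ring]
  exact_mod_cast (by linarith : 4 * n (2 * m) ≤ n (2 * m + 2))

lemma inv_cast_le_inv_two_mul_of_lt {j k : ℕ} (hkj : k < j) :
    (n j : ℝ)⁻¹ ≤ (2 * n k : ℝ)⁻¹ := by
  have h : 2 * n k ≤ n j :=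
    (two_mul_le_of_dvd_of_lt (hdvd k) (hmono k.lt_succ_self)).trans (hmono.monotone hkj)
  exact inv_anti₀ (by have := hpos k; positivity) (by exact_mod_cast h)

end DvdChainWeights

lemma Antitone.summable_of_summable_comp_two_mul {a : ℕ → ℝ} (ha : Antitone a)
    (ha0 : ∀ k, 0 ≤ a k) (h : Summable fun m => a (2 * m)) : Summable a :=
  h.even_add_odd (h.of_nonneg_of_le (fun _ => ha0 _) fun _ => ha (Nat.le_succ _))

lemma two_pi_mul_tsum_le_of_dvd {n : ℕ → ℕ} (hmono : StrictMono n) (hdvd : ∀ k, n k ∣ n (k + 1))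
    (hpos : ∀ k, 0 < n k) {a : ℕ → ℝ} (ha_pos : ∀ k, 0 < a k) (ha_anti : Antitone a) {C : ℝ}
    (hC : 2 * π ≤ C) (k : ℕ) :
    2 * π * n k * ∑' j, a (2 * (j + (k / 2 + 1))) / C * (n (2 * (j + (k / 2 + 1))) : ℝ)⁻¹ ≤
      a k := by
  have hC0 : 0 < C := Real.two_pi_pos.trans_le hC
  have hnk : (0 : ℝ) < n k := by exact_mod_cast hpos k
  have htail := tsum_mul_nat_add_le_of_le_mul (v := fun m => (n (2 * m) : ℝ)⁻¹)
    (p := fun m => a (2 * m) / C) (c := a k / C) (fun _ => by positivity) (by norm_num)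
    (by norm_num)
    (inv_cast_two_mul_succ_le hdvd hpos hmono) (k / 2 + 1) (fun _ => (div_pos (ha_pos _) hC0).le)
    (fun j => div_le_div_of_nonneg_right (ha_anti (by omega)) hC0.le)
  have hhead : (n (2 * (k / 2 + 1)) : ℝ)⁻¹ ≤ (2 * n k : ℝ)⁻¹ :=
    inv_cast_le_inv_two_mul_of_lt hdvd hpos hmono (by omega)
  have hak : 0 ≤ a k / C := (div_pos (ha_pos k) hC0).le
  calc 2 * π * n k * ∑' j, a (2 * (j + (k / 2 + 1))) / C * (n (2 * (j + (k / 2 + 1))) : ℝ)⁻¹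
      ≤ 2 * π * n k * (a k / C * ((n (2 * (k / 2 + 1)) : ℝ)⁻¹ / (1 - 4⁻¹))) := by gcongr
    _ ≤ 2 * π * n k * (a k / C * ((2 * n k : ℝ)⁻¹ / (1 - 4⁻¹))) := by gcongr
    _ = 4 / 3 * π / C * a k := by field_simp; ring
    _ ≤ a k := by
        refine mul_le_of_le_one_left (ha_pos k).le ?_
        rw [div_le_one hC0]
        linarith [Real.pi_pos]

theorem exists_continuous_measure_with_rate_of_dvd_general
    (n : ℕ → ℕ) (hmono : StrictMono n) (hpos : ∀ k, 0 < n k)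
    (hdvd : ∀ k, n k ∣ n (k + 1))
    (a : ℕ → ℝ) (ha_pos : ∀ k, 0 < a k) (ha_anti : Antitone a)
    (ha_div : ¬ Summable a) :
    ∃ σ : Measure ℂ, IsProbabilityMeasure σ ∧ σ {z : ℂ | ‖z‖ = 1}ᶜ = 0 ∧
      (∀ z : ℂ, σ {z} = 0) ∧
      ∀ k, ‖(∫ z : ℂ, z ^ (n k) ∂σ) - 1‖ ≤ a k := by
  set C := 2 * (a 0 + π)
  have hC0 : 0 < C := by linarith [ha_pos 0, Real.pi_pos]
  have hp (m : ℕ) : a (2 * m) / C ∈ Set.Icc 0 (1 / 2) := by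
    refine ⟨div_nonneg (ha_pos _).le hC0.le, ?_⟩
    rw [div_le_iff₀ hC0]
    linarith [ha_anti (Nat.zero_le (2 * m)), Real.pi_pos]
  set μ : ℕ → Measure Bool := fun m =>
    bernoulliMeasure true false ⟨a (2 * m) / C, (hp m).1, by linarith [(hp m).2]⟩
  set v : ℕ → ℝ := fun m => (n (2 * m) : ℝ)⁻¹
  have hv0 (m : ℕ) : 0 ≤ v m := by positivity
  have hvr := inv_cast_two_mul_succ_le hdvd hpos hmono
  have hvs : Summable v := summable_of_le_mul hv0 (by norm_num) (by norm_num) hvr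
  have : NullSingletonClass (Measure.infinitePi μ) := nullSingletonClass_infinitePi μ
    (fun m => (hp m).1) (fun h => ha_div <| ha_anti.summable_of_summable_comp_two_mul
      (fun k => (ha_pos k).le) ((summable_div_const_iff hC0.ne').1 h))
    fun m => bernoulliMeasure_real_singleton_le (hp m).2
  refine ⟨digitMeasure μ v, isProbabilityMeasure_digitMeasure μ hv0 hvs,
    digitMeasure_compl_unitSphere μ hv0 hvs, digitMeasure_singleton μ hv0 hvs
      (digitSum_injective hv0 hvs (tsum_nat_add_succ_lt_of_le_mul hv0 (by norm_num) (by norm_num)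
        hvr (by norm_num) (fun m => by have := hpos (2 * m); positivity))), fun k => ?_⟩
  refine (norm_integral_pow_digitMeasure_sub_one_le μ hv0 hvs (n k) (k / 2 + 1)
    fun m hm => exists_int_cast_mul_inv_eq hdvd hpos (by omega)).trans ?_
  simpa [μ] using two_pi_mul_tsum_le_of_dvd hmono hdvd hpos ha_pos ha_anti
    (by linarith [ha_pos 0] : 2 * π ≤ C) k

/-- Remark 3.9: if `n_k ∣ n_{k+1}` for every `k` and `(a_k)` is a sequence of positive
reals decreasing to zero with `∑ a_k = ∞`, there is a continuous (atomless) probability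
measure `σ` on the unit circle such that `|σ̂(n_k) - 1| ≤ a_k` for every `k`. -/
theorem exists_continuous_measure_with_rate_of_dvd
    (n : ℕ → ℕ) (hmono : StrictMono n) (hpos : ∀ k, 0 < n k)
    (hdvd : ∀ k, n k ∣ n (k + 1))
    (a : ℕ → ℝ) (ha_pos : ∀ k, 0 < a k) (ha_anti : Antitone a)
    (ha_lim : Tendsto a atTop (𝓝 0)) (ha_div : ¬ Summable a) :
    ∃ σ : Measure ℂ, IsProbabilityMeasure σ ∧ σ {z : ℂ | ‖z‖ = 1}ᶜ = 0 ∧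
      (∀ z : ℂ, σ {z} = 0) ∧
      ∀ k, ‖(∫ z : ℂ, z ^ (n k) ∂σ) - 1‖ ≤ a k :=
  exists_continuous_measure_with_rate_of_dvd_general n hmono hpos hdvd a ha_pos ha_anti ha_div
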